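/- arXiv:2302.11455 — 2 statements merged into one kernel-verified Lean document; each statement's English description precedes it below -/
import Mathlib

section
/- Let $(E,\|\cdot\|)$ be a normed vector space, $\ell>0$, $C_1,C_2\ge 0$, $\eta\in(0,1)$, and let $f:[0,1]\to E$ be bounded with $f(0)=0$ satisfying, for all $0\le s\le t\le 1$ with $t-s\le\ell$, $\|f(t)-f(s)\|\le C_1(M_{s,t}+\eta)(t-s)^{1/2}+C_2(M_{s,t}+\eta)\,|\log(M_{s,t}+\eta)|\,(t-s)$, where $M_{s,t}=\sup_{r\in[s,t]}\|f(r)\|$. Then for every $\delta\in(0,e^{-C_2})$ there exists $\bar\eta>0$ depending only on $C_1,C_2,\ell,\delta$ such that if $\eta<\bar\eta$ then $\sup_{t\in[0,1]}\|f(t)\|\le \eta^{e^{-C_2}-\delta}$. -/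
open Set Real

private lemma xlogx_mono {x y : ℝ} (hx : 0 < x) (hxy : x ≤ y) (hy : y ≤ Real.exp (-1)) :
    x * (-Real.log x) ≤ y * (-Real.log y) := by
  have hy0 : 0 < y := lt_of_lt_of_le hx hxy
  have h1 : Real.log (y / x) ≤ y / x - 1 := Real.log_le_sub_one_of_pos (by positivity)
  have h2 : Real.log (y / x) = Real.log y - Real.log x :=
    Real.log_div (ne_of_gt hy0) (ne_of_gt hx)
  have h3 : Real.log y ≤ -1 := by
    have h4 : Real.log y ≤ Real.log (Real.exp (-1)) := Real.log_le_log hy0 hy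
    rwa [Real.log_exp] at h4
  have h4 : x * (Real.log y - Real.log x) ≤ y - x := by
    have h5 := mul_le_mul_of_nonneg_left h1 hx.le
    rw [h2] at h5
    have h6 : x * (y / x - 1) = y - x := by field_simp
    linarith
  have h6 : y - x ≤ (y - x) * (-Real.log y) :=
    le_mul_of_one_le_right (by linarith) (by linarith)
  nlinarith [h4, h6]

private lemma bdd_norm {E : Type*} [NormedAddCommGroup E] {f : ℝ → E} {B a b : ℝ}
    (hB : ∀ t ∈ Icc (0:ℝ) 1, ‖f t‖ ≤ B) (ha : 0 ≤ a) (hb : b ≤ 1) :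
    BddAbove (Set.range fun r : Icc a b => ‖f (r:ℝ)‖) := by
  refine ⟨max B 0, ?_⟩
  rintro x ⟨⟨r, hr⟩, rfl⟩
  exact le_max_of_le_left (hB r ⟨ha.trans hr.1, hr.2.trans hb⟩)

private lemma le_sup_norm {E : Type*} [NormedAddCommGroup E] {f : ℝ → E} {B a b r : ℝ}
    (hB : ∀ t ∈ Icc (0:ℝ) 1, ‖f t‖ ≤ B) (ha : 0 ≤ a) (hb : b ≤ 1) (hr : r ∈ Icc a b) :
    ‖f r‖ ≤ ⨆ r : Icc a b, ‖f (r:ℝ)‖ :=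
  le_ciSup (bdd_norm hB ha hb) ⟨r, hr⟩

private lemma sup_norm_le {E : Type*} [NormedAddCommGroup E] {f : ℝ → E} {a b M : ℝ}
    (hab : a ≤ b) (h : ∀ r ∈ Icc a b, ‖f r‖ ≤ M) :
    (⨆ r : Icc a b, ‖f (r:ℝ)‖) ≤ M := by
  haveI : Nonempty (Icc a b) := (nonempty_Icc.mpr hab).to_subtype
  exact ciSup_le fun r => h r r.2

private lemma arith_sh {C₁ σ Λ h sh : ℝ} (hC₁ : 0 ≤ C₁) (hσ0 : 0 < σ) (hh0 : 0 < h)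
    (hsh0 : 0 < sh) (hsh2 : sh^2 = h) (hΛC₁ : 4*C₁^2 ≤ Λ*σ^2) (hΛh : Λ*h ≤ 1)
    (hΛ0 : 0 < Λ) : C₁*sh ≤ σ/2 := by
  have h1 : (C₁*sh)^2 ≤ (σ/2)^2 := by nlinarith [sq_nonneg σ, sq_nonneg C₁]
  have h2 : 0 ≤ C₁*sh := by positivity
  nlinarith

private lemma arith_e2 {C₂ σ K Λ h : ℝ} (hC₂ : 0 ≤ C₂) (hσ0 : 0 < σ)
    (hKC₂ : 2*C₂/σ ≤ K) (hKΛh : K*Λ*h ≤ 1) (hΛ0 : 0 < Λ) (hh0 : 0 < h) :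
    C₂*Λ*h ≤ σ/2 := by
  have h1 : 2*C₂ ≤ K*σ := by
    have h2 : 2*C₂/σ * σ = 2*C₂ := by field_simp
    nlinarith
  nlinarith [mul_pos hΛ0 hh0]

private lemma arith_F3 {C₁ δ K Λ x : ℝ} (hC₁ : 0 ≤ C₁) (hδ0 : 0 < δ) (hx0 : 0 ≤ x)
    (hx2 : 32*C₁^2*K ≤ Λ*δ^2) (hN2 : x^2 ≤ 2*(K*Λ)) (hΛ0 : 0 < Λ) (hK0 : 0 < K) :
    2*C₁*x ≤ δ/2*Λ := by
  have h1 : (2*C₁*x)^2 ≤ (δ/2*Λ)^2 := by nlinarith [sq_nonneg C₁, sq_nonneg x, sq_nonneg δ]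
  have h2 : 0 ≤ 2*C₁*x := by positivity
  have h3 : 0 ≤ δ/2*Λ := by positivity
  nlinarith

private lemma exp_bound1 {C₂ σ δ : ℝ} (hC₂ : 0 ≤ C₂) (hσ0 : 0 < σ) (hσC₂ : 4*σ*C₂ ≤ δ)
    (hE : Real.exp (-C₂) ≤ 1) : Real.exp (-C₂) - δ/2 ≤ Real.exp (-((1+2*σ)*C₂)) := by
  have e0 : Real.exp (-((1+2*σ)*C₂)) = Real.exp (-C₂) * Real.exp (-(2*σ*C₂)) := by
    rw [← Real.exp_add]; congr 1; ring
  have e1 : 1 - 2*σ*C₂ ≤ Real.exp (-(2*σ*C₂)) := by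
    have := Real.add_one_le_exp (-(2*σ*C₂)); linarith
  have e2 : 0 < Real.exp (-C₂) := Real.exp_pos _
  nlinarith [mul_nonneg hσ0.le hC₂]

private lemma exp_neg_two_le_quarter : Real.exp (-2) ≤ 1/4 := by
  have h1 : (2:ℝ) ≤ Real.exp 1 := by linarith [Real.add_one_le_exp (1:ℝ)]
  have h2 : (4:ℝ) ≤ Real.exp 2 := by
    rw [show (2:ℝ) = 1+1 by norm_num, Real.exp_add]; nlinarith
  rw [Real.exp_neg]
  have h3 : (Real.exp 2)⁻¹ ≤ (4:ℝ)⁻¹ := inv_anti₀ (by norm_num) h2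
  linarith [h3]

private lemma two_exp_neg_two_le : 2*Real.exp (-2) ≤ Real.exp (-1) := by
  have h1 : Real.exp (-2) = Real.exp (-1) * Real.exp (-1) := by
    rw [← Real.exp_add]; norm_num
  have h2 : Real.exp (-1) ≤ 1/2 := by
    rw [Real.exp_neg]
    have h3 : (Real.exp 1)⁻¹ ≤ (2:ℝ)⁻¹ :=
      inv_anti₀ (by norm_num) (by linarith [Real.add_one_le_exp (1:ℝ)])
    linarith [h3]
  nlinarith [Real.exp_pos (-(1:ℝ))]

private lemma self_le_sqrt {x : ℝ} (h0 : 0 ≤ x) (h1 : x ≤ 1) : x ≤ Real.sqrt x := by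
  have h2 : Real.sqrt x ≤ Real.sqrt 1 := Real.sqrt_le_sqrt h1
  rw [Real.sqrt_one] at h2
  nlinarith [Real.sq_sqrt h0, Real.sqrt_nonneg x]

private lemma sqrt_small {Cf r : ℝ} (hCf0 : 0 ≤ Cf) (hr0 : 0 < r)
    (hr2 : r ≤ 1/(8*(Cf+1)^2)) : Cf * Real.sqrt (2*r) ≤ 1/2 := by
  have hCf1 : 0 < Cf + 1 := by linarith
  have h1 : Real.sqrt (2*r) ≤ 1/(2*(Cf+1)) := by
    rw [show (1/(2*(Cf+1))) = Real.sqrt ((1/(2*(Cf+1)))^2) from (Real.sqrt_sq (by positivity)).symm]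
    apply Real.sqrt_le_sqrt
    have h2 : (1/(2*(Cf+1)))^2 = 1/(4*(Cf+1)^2) := by
      rw [div_pow]; congr 1 <;> ring
    rw [h2]
    have h3 : 2*(1/(8*(Cf+1)^2)) = 1/(4*(Cf+1)^2) := by
      rw [mul_one_div]; rw [div_eq_div_iff (by positivity) (by positivity)]; ring
    linarith
  have h3 : Cf * (1/(2*(Cf+1))) ≤ 1/2 := by
    rw [mul_one_div, div_le_iff₀ (by positivity : (0:ℝ) < 2*(Cf+1))]; linarith
  have h4 : Cf*Real.sqrt (2*r) ≤ Cf*(1/(2*(Cf+1))) := mul_le_mul_of_nonneg_left h1 hCf0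
  linarith

private lemma log_contract {m g x σ' : ℝ} (hm0 : 0 < m) (hg0 : 0 < g) (hx0 : 0 ≤ x)
    (hxσ : x ≤ σ') (hσ' : σ' ≤ 1/2) (hmx : m*(1-x) ≤ g) :
    Real.log m ≤ Real.log g + (1+2*σ')*x := by
  have h1x : 0 < 1 - x := by linarith
  have h1 : Real.log (m*(1-x)) ≤ Real.log g := Real.log_le_log (by positivity) hmx
  rw [Real.log_mul (ne_of_gt hm0) (ne_of_gt h1x)] at h1
  have h2 : -Real.log (1-x) ≤ (1+2*σ')*x := by
    have h3 := Real.log_le_sub_one_of_pos (show (0:ℝ) < (1-x)⁻¹ by positivity)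
    rw [Real.log_inv] at h3
    have h4 : (1-x)⁻¹ - 1 = x/(1-x) := by field_simp; ring
    have h6 : 1 ≤ (1+2*σ')*(1-x) := by
      nlinarith [mul_nonneg (hx0.trans hxσ) (show (0:ℝ) ≤ 1-2*x by linarith)]
    have h5 : x/(1-x) ≤ (1+2*σ')*x := by
      rw [div_le_iff₀ h1x]
      nlinarith [mul_le_mul_of_nonneg_right h6 hx0]
    linarith
  linarith

private lemma alpha_rec {Λ D c s : ℝ} {k : ℕ} (hD1 : 1 ≤ D) (hΛ0 : 0 ≤ Λ)
    (hcs : 0 ≤ c*s) :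
    -(Λ/D^k - c*s*(k:ℝ)) + c*s ≤ (-(Λ/D^(k+1) - c*s*((k:ℝ)+1))) * D := by
  have hD0 : 0 < D := by linarith
  have h1 : Λ/D^(k+1) * D = Λ/D^k := by
    rw [pow_succ]
    field_simp
  have h2 : c*s*((k:ℝ)+1) ≤ c*s*((k:ℝ)+1) * D :=
    le_mul_of_one_le_right (mul_nonneg hcs (by positivity)) hD1
  nlinarith [h1, h2]

set_option maxHeartbeats 1000000 in
theorem critical_gronwall {E : Type*} [NormedAddCommGroup E] [NormedSpace ℝ E]
    (ℓ C₁ C₂ : ℝ) (hℓ : 0 < ℓ) (hC₁ : 0 ≤ C₁) (hC₂ : 0 ≤ C₂)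
    (δ : ℝ) (hδ : δ ∈ Set.Ioo 0 (Real.exp (-C₂))) :
    ∃ ηbar : ℝ, 0 < ηbar ∧ ∀ η : ℝ, η ∈ Set.Ioo (0:ℝ) 1 → η < ηbar →
      ∀ f : ℝ → E,
        (∃ B : ℝ, ∀ t ∈ Set.Icc (0:ℝ) 1, ‖f t‖ ≤ B) →
        f 0 = 0 →
        (∀ s t : ℝ, 0 ≤ s → s ≤ t → t ≤ 1 → t - s ≤ ℓ →
          ‖f t - f s‖ ≤
            C₁ * ((⨆ r : Set.Icc s t, ‖f (r : ℝ)‖) + η) * (t - s) ^ ((1:ℝ)/2)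
            + C₂ * ((⨆ r : Set.Icc s t, ‖f (r : ℝ)‖) + η)
                * |Real.log ((⨆ r : Set.Icc s t, ‖f (r : ℝ)‖) + η)| * (t - s)) →
        ∀ t ∈ Set.Icc (0:ℝ) 1, ‖f t‖ ≤ η ^ (Real.exp (-C₂) - δ) := by
  obtain ⟨hδ0, hδ1⟩ := hδ
  have hexpC₂le1 : Real.exp (-C₂) ≤ 1 := Real.exp_le_one_iff.mpr (by linarith)
  have hδlt1 : δ < 1 := lt_of_lt_of_le hδ1 hexpC₂le1
  obtain ⟨σ, hσ0, hσ4⟩ : ∃ σ : ℝ, 0 < σ ∧ σ * (4*C₂ + 4) = δ :=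
    ⟨δ/(4*C₂+4), by positivity, by field_simp⟩
  have hσC₂ : 4*σ*C₂ ≤ δ := by linarith [mul_nonneg hσ0.le hC₂]
  have hσhalf : σ ≤ 1/2 := by linarith [mul_nonneg hσ0.le hC₂]
  have hβ0 : 0 < Real.exp (-C₂) - δ := sub_pos.mpr hδ1
  obtain ⟨K, hK1, hKℓ, hKC₂⟩ : ∃ K : ℝ, 1 ≤ K ∧ 1/ℓ ≤ K ∧ 2*C₂/σ ≤ K := by
    refine ⟨1 + 1/ℓ + 2*C₂/σ, ?_, ?_, ?_⟩ <;>
    · have h1 : 0 ≤ 1/ℓ := by positivity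
      have h2 : 0 ≤ 2*C₂/σ := by positivity
      linarith
  have hK0 : 0 < K := by linarith
  obtain ⟨Λ₀, hΛ₀1, hΛ₀β, hΛ₀C₁, hΛ₀K⟩ :
      ∃ Λ₀ : ℝ, 1 ≤ Λ₀ ∧ 2/(Real.exp (-C₂) - δ) ≤ Λ₀ ∧ 4*C₁^2/σ^2 ≤ Λ₀ ∧
        32*C₁^2*K/δ^2 ≤ Λ₀ := by
    refine ⟨1 + 2/(Real.exp (-C₂) - δ) + 4*C₁^2/σ^2 + 32*C₁^2*K/δ^2, ?_, ?_, ?_, ?_⟩ <;>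
    · have h1 : 0 ≤ 2/(Real.exp (-C₂) - δ) := by positivity
      have h2 : 0 ≤ 4*C₁^2/σ^2 := by positivity
      have h3 : 0 ≤ 32*C₁^2*K/δ^2 := by positivity
      linarith
  refine ⟨Real.exp (-Λ₀), Real.exp_pos _, ?_⟩
  intro η hη hηb f hfB hf0 hf
  obtain ⟨hη0, hη1⟩ := hη
  obtain ⟨B₀, hB₀⟩ := hfB
  obtain ⟨B, hB, hB0⟩ : ∃ B : ℝ, (∀ t ∈ Icc (0:ℝ) 1, ‖f t‖ ≤ B) ∧ 0 ≤ B :=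
    ⟨max B₀ 0, fun t ht => (hB₀ t ht).trans (le_max_left _ _), le_max_right _ _⟩
  obtain ⟨Λ, hΛdef⟩ : ∃ Λ : ℝ, Λ = -Real.log η := ⟨_, rfl⟩
  have hΛgt : Λ₀ < Λ := by
    have h1 : Real.log η < Real.log (Real.exp (-Λ₀)) := Real.log_lt_log hη0 hηb
    rw [Real.log_exp] at h1
    rw [hΛdef]; linarith
  have hΛ1 : 1 ≤ Λ := le_trans hΛ₀1 hΛgt.le
  have hΛ0 : 0 < Λ := by linarith
  have hΛβ : 2 ≤ (Real.exp (-C₂) - δ) * Λ := by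
    have h1 : 2/(Real.exp (-C₂) - δ) ≤ Λ := by linarith
    rw [div_le_iff₀ hβ0] at h1
    linarith [mul_comm Λ (Real.exp (-C₂) - δ)]
  have hΛC₁ : 4*C₁^2 ≤ Λ * σ^2 := by
    have h1 : 4*C₁^2/σ^2 ≤ Λ := by linarith
    rw [div_le_iff₀ (by positivity : (0:ℝ) < σ^2)] at h1
    linarith [mul_comm Λ (σ^2)]
  have hΛK : 32*C₁^2*K ≤ Λ * δ^2 := by
    have h1 : 32*C₁^2*K/δ^2 ≤ Λ := by linarith
    rw [div_le_iff₀ (by positivity : (0:ℝ) < δ^2)] at h1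
    linarith [mul_comm Λ (δ^2)]
  have hKΛ1 : 1 ≤ K * Λ := by
    calc (1:ℝ) = 1*1 := by norm_num
    _ ≤ K*Λ := mul_le_mul hK1 hΛ1 zero_le_one (by linarith)
  obtain ⟨N, hNKΛ, hN2KΛ⟩ : ∃ N : ℕ, K * Λ ≤ (N:ℝ) ∧ (N:ℝ) ≤ 2*(K*Λ) := by
    refine ⟨Nat.ceil (K*Λ), Nat.le_ceil _, ?_⟩
    have h1 := Nat.ceil_lt_add_one (show (0:ℝ) ≤ K*Λ by linarith)
    linarith
  have hN1 : 1 ≤ (N:ℝ) := le_trans hKΛ1 hNKΛ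
  have hN0 : (0:ℝ) < N := by linarith
  obtain ⟨h, hhdef⟩ : ∃ h : ℝ, h = 1/(N:ℝ) := ⟨_, rfl⟩
  have hh0 : 0 < h := by rw [hhdef]; positivity
  have hh1 : h ≤ 1 := by rw [hhdef, div_le_one hN0]; exact hN1
  have hhN : h * (N:ℝ) = 1 := by rw [hhdef, one_div, inv_mul_cancel₀ (ne_of_gt hN0)]
  obtain ⟨sh, hshdef⟩ : ∃ sh : ℝ, sh = Real.sqrt h := ⟨_, rfl⟩
  have hsh0 : 0 < sh := by rw [hshdef]; exact Real.sqrt_pos.mpr hh0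
  have hsh2 : sh^2 = h := by rw [hshdef]; exact Real.sq_sqrt hh0.le
  have hshN : sh * (N:ℝ) = Real.sqrt N := by
    have h1 : Real.sqrt (N:ℝ) * Real.sqrt (N:ℝ) = (N:ℝ) := Real.mul_self_sqrt hN0.le
    have h2 : sh * Real.sqrt (N:ℝ) = 1 := by
      rw [hshdef, ← Real.sqrt_mul hh0.le, hhN, Real.sqrt_one]
    calc sh * (N:ℝ) = sh * (Real.sqrt (N:ℝ) * Real.sqrt (N:ℝ)) := by rw [h1]
    _ = (sh * Real.sqrt (N:ℝ)) * Real.sqrt (N:ℝ) := by ring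
    _ = Real.sqrt (N:ℝ) := by rw [h2, one_mul]
  have hhℓ : h ≤ ℓ := by
    rw [hhdef, div_le_iff₀ hN0]
    have h1 : (1/ℓ) * Λ ≤ K * Λ := mul_le_mul_of_nonneg_right hKℓ hΛ0.le
    have h2 : ℓ * ((1/ℓ) * Λ) = Λ := by field_simp
    have h3 : ℓ * ((1/ℓ) * Λ) ≤ ℓ * ((N:ℝ)) := by
      apply mul_le_mul_of_nonneg_left (h1.trans hNKΛ) hℓ.le
    linarith
  have hΛN : Λ ≤ (N:ℝ) := by
    have h1 : 1*Λ ≤ K*Λ := mul_le_mul_of_nonneg_right hK1 hΛ0.le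
    linarith
  have hΛh : Λ * h ≤ 1 := by rw [hhdef, mul_one_div, div_le_one hN0]; exact hΛN
  have hKΛh : K * Λ * h ≤ 1 := by rw [hhdef, mul_one_div, div_le_one hN0]; exact hNKΛ
  have hF2 : C₁ * sh + C₂ * Λ * h ≤ σ := by
    have e1 : C₁ * sh ≤ σ/2 := arith_sh hC₁ hσ0 hh0 hsh0 hsh2 hΛC₁ hΛh hΛ0
    have e2 : C₂ * Λ * h ≤ σ/2 := arith_e2 hC₂ hσ0 hKC₂ hKΛh hΛ0 hh0
    linarith
  have hF3 : 2*C₁*Real.sqrt N ≤ δ/2 * Λ := by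
    have h1 : (Real.sqrt (N:ℝ))^2 ≤ 2*(K*Λ) := by
      rw [Real.sq_sqrt hN0.le]; exact hN2KΛ
    exact arith_F3 hC₁ hδ0 (Real.sqrt_nonneg _) hΛK h1 hΛ0 hK0
  obtain ⟨c₁, hc₁def⟩ : ∃ x : ℝ, x = (1+2*σ)*C₁ := ⟨_, rfl⟩
  obtain ⟨c₂, hc₂def⟩ : ∃ x : ℝ, x = (1+2*σ)*C₂ := ⟨_, rfl⟩
  have hc₁0 : 0 ≤ c₁ := by rw [hc₁def]; positivity
  have hc₂0 : 0 ≤ c₂ := by rw [hc₂def]; positivity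
  have hc₁2 : c₁ ≤ 2*C₁ := by
    rw [hc₁def]
    linarith [mul_le_mul_of_nonneg_right hσhalf hC₁]
  obtain ⟨D, hDdef⟩ : ∃ x : ℝ, x = 1 + c₂*h := ⟨_, rfl⟩
  have hD1 : 1 ≤ D := by rw [hDdef]; linarith [mul_nonneg hc₂0 hh0.le]
  have hD0 : 0 < D := by linarith
  obtain ⟨α, hαdef⟩ : ∃ α : ℕ → ℝ, α = fun k : ℕ => Λ / D^k - c₁ * sh * (k:ℝ) :=
    ⟨fun k : ℕ => Λ / D^k - c₁ * sh * (k:ℝ), rfl⟩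
  have hαeq : ∀ k : ℕ, α k = Λ / D^k - c₁ * sh * (k:ℝ) := fun k => by rw [hαdef]
  have hα0 : α 0 = Λ := by rw [hαeq 0]; norm_num
  have hαsucc : ∀ k, α (k+1) ≤ α k := by
    intro k
    have h1 : Λ / D^(k+1) ≤ Λ / D^k := by
      apply div_le_div_of_nonneg_left hΛ0.le (by positivity)
      calc D^k = D^k * 1 := (mul_one _).symm
      _ ≤ D^k * D := mul_le_mul_of_nonneg_left hD1 (by positivity)
      _ = D^(k+1) := (pow_succ D k).symm
    have h2 : c₁ * sh * (k:ℝ) ≤ c₁ * sh * ((k:ℝ)+1) :=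
      mul_le_mul_of_nonneg_left (by linarith) (mul_nonneg hc₁0 hsh0.le)
    rw [hαeq k, hαeq (k+1)]
    push_cast
    linarith
  have hαanti : ∀ k l : ℕ, k ≤ l → α l ≤ α k :=
    fun k l hkl => antitone_nat_of_succ_le hαsucc hkl
  have hαN : (Real.exp (-C₂) - δ) * Λ ≤ α N := by
    have hDexp : D ≤ Real.exp (c₂*h) := by
      have := Real.add_one_le_exp (c₂*h)
      rw [hDdef]; linarith
    have hDN : D^N ≤ Real.exp c₂ := by
      calc D^N ≤ (Real.exp (c₂*h))^N := pow_le_pow_left₀ hD0.le hDexp N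
      _ = Real.exp ((N:ℝ) * (c₂*h)) := (Real.exp_nat_mul _ N).symm
      _ = Real.exp c₂ := by rw [show (N:ℝ)*(c₂*h) = c₂*(h*(N:ℝ)) by ring, hhN, mul_one]
    have hDNpos : 0 < D^N := pow_pos hD0 N
    have h1 : Λ * Real.exp (-c₂) ≤ Λ / D^N := by
      rw [Real.exp_neg, ← div_eq_mul_inv]
      exact div_le_div_of_nonneg_left hΛ0.le hDNpos hDN
    have h2 : Real.exp (-C₂) - δ/2 ≤ Real.exp (-c₂) := by
      have := exp_bound1 hC₂ hσ0 hσC₂ hexpC₂le1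
      rwa [← hc₂def] at this
    have h3 : c₁ * sh * (N:ℝ) ≤ δ/2 * Λ := by
      rw [mul_assoc, hshN]
      calc c₁ * Real.sqrt N ≤ 2*C₁ * Real.sqrt N :=
            mul_le_mul_of_nonneg_right hc₁2 (Real.sqrt_nonneg _)
      _ ≤ δ/2 * Λ := hF3
    have h4 : Λ * (Real.exp (-C₂) - δ/2) ≤ Λ * Real.exp (-c₂) :=
      mul_le_mul_of_nonneg_left h2 hΛ0.le
    rw [hαeq N]
    linarith [h1, h3, h4]
  have hα2 : ∀ k : ℕ, k ≤ N → 2 ≤ α k :=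
    fun k hk => le_trans (le_trans hΛβ hαN) (hαanti k N hk)
  -- modulus of continuity
  obtain ⟨Cf, hCfdef⟩ : ∃ x : ℝ, x = C₁*(B+1) + C₂*(B+1)*(Λ + B + 1) := ⟨_, rfl⟩
  have hCf0 : 0 ≤ Cf := by
    have h1 : 0 ≤ Λ + B + 1 := by linarith
    rw [hCfdef]; positivity
  have hmod : ∀ a b : ℝ, 0 ≤ a → a ≤ b → b ≤ 1 → b - a ≤ ℓ →
      ‖f b - f a‖ ≤ Cf * Real.sqrt (b-a) := by
    intro a b ha hab hb1 habl
    have key := hf a b ha hab hb1 habl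
    obtain ⟨M, hMdef⟩ : ∃ x : ℝ, x = ⨆ r : Icc a b, ‖f (r:ℝ)‖ := ⟨_, rfl⟩
    rw [← hMdef] at key
    have hM0 : 0 ≤ M := by
      rw [hMdef]
      exact le_trans (norm_nonneg (f a)) (le_sup_norm hB ha hb1 ⟨le_refl a, hab⟩)
    have hMB : M ≤ B := by
      rw [hMdef]
      exact sup_norm_le hab (fun r hr => hB r ⟨ha.trans hr.1, hr.2.trans hb1⟩)
    have hMη0 : 0 < M + η := by linarith
    have hlog : |Real.log (M+η)| ≤ Λ + B + 1 := by
      rcases le_total (M+η) 1 with hc | hc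
      · rw [abs_of_nonpos (Real.log_nonpos hMη0.le hc)]
        have h1 : Real.log η ≤ Real.log (M+η) := Real.log_le_log hη0 (by linarith)
        rw [hΛdef]; linarith
      · rw [abs_of_nonneg (Real.log_nonneg hc)]
        have h1 := Real.log_le_sub_one_of_pos hMη0
        linarith
    have hba0 : 0 ≤ b - a := by linarith
    have hba1 : b - a ≤ 1 := by linarith
    have hsba1 : Real.sqrt (b-a) ≤ 1 := by
      rw [show (1:ℝ) = Real.sqrt 1 from Real.sqrt_one.symm]
      exact Real.sqrt_le_sqrt hba1
    have hle : b - a ≤ Real.sqrt (b-a) := self_le_sqrt hba0 hba1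
    have hrp : (b-a)^((1:ℝ)/2) = Real.sqrt (b-a) := (Real.sqrt_eq_rpow _).symm
    rw [hrp] at key
    have t1 : C₁*(M+η)*Real.sqrt (b-a) ≤ C₁*(B+1)*Real.sqrt (b-a) := by
      apply mul_le_mul_of_nonneg_right _ (Real.sqrt_nonneg _)
      apply mul_le_mul_of_nonneg_left (by linarith) hC₁
    have t2 : C₂*(M+η)* |Real.log (M+η)| *(b-a) ≤ C₂*(B+1)*(Λ+B+1)*Real.sqrt (b-a) := by
      have s1 : C₂*(M+η) ≤ C₂*(B+1) := mul_le_mul_of_nonneg_left (by linarith) hC₂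
      have s2 : C₂*(M+η)* |Real.log (M+η)| ≤ C₂*(B+1)*(Λ+B+1) :=
        mul_le_mul s1 hlog (abs_nonneg _) (by positivity)
      have s3 : C₂*(M+η)* |Real.log (M+η)| *(b-a) ≤ C₂*(B+1)*(Λ+B+1)*(b-a) :=
        mul_le_mul_of_nonneg_right s2 hba0
      have hpos : 0 ≤ C₂*(B+1)*(Λ+B+1) := by
        have h1 : 0 ≤ Λ + B + 1 := by linarith
        positivity
      have s4 : C₂*(B+1)*(Λ+B+1)*(b-a) ≤ C₂*(B+1)*(Λ+B+1)*Real.sqrt (b-a) :=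
        mul_le_mul_of_nonneg_left hle hpos
      linarith
    calc ‖f b - f a‖ ≤ C₁*(M+η)*Real.sqrt (b-a) + C₂*(M+η)* |Real.log (M+η)| *(b-a) := key
    _ ≤ C₁*(B+1)*Real.sqrt (b-a) + C₂*(B+1)*(Λ+B+1)*Real.sqrt (b-a) := by linarith
    _ = Cf * Real.sqrt (b-a) := by rw [hCfdef]; ring
  -- the running supremum
  obtain ⟨G, hGdef⟩ : ∃ G : ℝ → ℝ, G = fun τ => (⨆ r : Icc (0:ℝ) τ, ‖f (r:ℝ)‖) + η :=
    ⟨_, rfl⟩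
  have hGeq : ∀ τ : ℝ, G τ = (⨆ r : Icc (0:ℝ) τ, ‖f (r:ℝ)‖) + η := fun τ => by rw [hGdef]
  have hGη : ∀ τ : ℝ, 0 ≤ τ → τ ≤ 1 → η ≤ G τ := by
    intro τ h0 h1
    have h2 := le_trans (norm_nonneg (f 0)) (le_sup_norm hB le_rfl h1 ⟨le_rfl, h0⟩)
    linarith [hGeq τ]
  have hG0 : G 0 = η := by
    have h1 : (⨆ r : Icc (0:ℝ) 0, ‖f (r:ℝ)‖) ≤ 0 := by
      apply sup_norm_le le_rfl
      intro r hr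
      have : r = 0 := le_antisymm hr.2 hr.1
      rw [this, hf0]; simp
    have h2 : (0:ℝ) ≤ ⨆ r : Icc (0:ℝ) 0, ‖f (r:ℝ)‖ :=
      le_trans (norm_nonneg (f 0)) (le_sup_norm hB le_rfl zero_le_one ⟨le_rfl, le_rfl⟩)
    linarith [hGeq 0]
  have he1le : Real.exp (-(1:ℝ)) ≤ 1 := Real.exp_le_one_iff.mpr (by norm_num)
  -- main induction step
  have step : ∀ k : ℕ, k < N → G ((k:ℝ)*h) ≤ Real.exp (-α k) →
      G (((k:ℝ)+1)*h) ≤ Real.exp (-α (k+1)) := by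
    intro k hkN ih
    have hkr : (k:ℝ) + 1 ≤ (N:ℝ) := by exact_mod_cast Nat.succ_le_of_lt hkN
    obtain ⟨s, hsdef⟩ : ∃ x : ℝ, x = (k:ℝ)*h := ⟨_, rfl⟩
    obtain ⟨t, htdef⟩ : ∃ x : ℝ, x = ((k:ℝ)+1)*h := ⟨_, rfl⟩
    rw [← hsdef] at ih
    rw [← htdef]
    have hs0 : 0 ≤ s := by rw [hsdef]; positivity
    have hts : t - s = h := by rw [hsdef, htdef]; ring
    have hst : s ≤ t := by linarith
    have ht1 : t ≤ 1 := by
      rw [htdef]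
      have h1 : ((k:ℝ)+1)*h ≤ (N:ℝ)*h := mul_le_mul_of_nonneg_right hkr hh0.le
      have h2 : (N:ℝ)*h = 1 := by rw [mul_comm]; exact hhN
      linarith
    have hαk2 : 2 ≤ α k := hα2 k hkN.le
    have hαk12 : 2 ≤ α (k+1) := hα2 (k+1) hkN
    have hexpk : Real.exp (-α k) ≤ Real.exp (-2) := Real.exp_le_exp.mpr (by linarith)
    have hg2 : G s ≤ Real.exp (-2) := le_trans ih hexpk
    have hgη : η ≤ G s := hGη s hs0 (hst.trans ht1)
    have hg0 : 0 < G s := lt_of_lt_of_le hη0 hgη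
    have hq : Real.exp (-2) ≤ 1/4 := exp_neg_two_le_quarter
    -- claim A : a-priori self-improving estimate
    have claimA : ∀ τ, τ ∈ Icc s t → G τ ≤ 1 → G τ ≤ G s + σ * G τ := by
      intro τ hτ hτ1
      have hτ0 : 0 ≤ τ := hs0.trans hτ.1
      have hτle1 : τ ≤ 1 := hτ.2.trans ht1
      have hGτ0 : 0 ≤ G τ := le_trans hη0.le (hGη τ hτ0 hτle1)
      have hpt : ∀ ρ ∈ Icc (0:ℝ) τ, ‖f ρ‖ ≤ G s + σ * G τ - η := by
        intro ρ hρ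
        have hρ1 : ρ ≤ 1 := hρ.2.trans hτle1
        rcases le_total ρ s with hρs | hsρ
        · have h1 : ‖f ρ‖ ≤ ⨆ r : Icc (0:ℝ) s, ‖f (r:ℝ)‖ :=
            le_sup_norm hB le_rfl (hst.trans ht1) ⟨hρ.1, hρs⟩
          have h2 : 0 ≤ σ * G τ := mul_nonneg hσ0.le hGτ0
          linarith [hGeq s]
        · have hρs' : ρ - s ≤ h := by linarith [hρ.2, hτ.2]
          have key := hf s ρ hs0 hsρ hρ1 (by linarith)
          obtain ⟨M', hM'def⟩ : ∃ x : ℝ, x = ⨆ r : Icc s ρ, ‖f (r:ℝ)‖ := ⟨_, rfl⟩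
          rw [← hM'def] at key
          have hM'0 : 0 ≤ M' := by
            rw [hM'def]
            exact le_trans (norm_nonneg (f s)) (le_sup_norm hB hs0 hρ1 ⟨le_rfl, hsρ⟩)
          have hM'G : M' + η ≤ G τ := by
            have h1 : M' ≤ ⨆ r : Icc (0:ℝ) τ, ‖f (r:ℝ)‖ := by
              rw [hM'def]
              exact sup_norm_le hsρ (fun r hr =>
                le_sup_norm hB le_rfl hτle1 ⟨hs0.trans hr.1, hr.2.trans hρ.2⟩)
            linarith [hGeq τ]
          have hMη0 : 0 < M' + η := by linarith
          have hlogM : |Real.log (M' + η)| ≤ Λ := by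
            rw [abs_of_nonpos (Real.log_nonpos hMη0.le (by linarith))]
            have h1 : Real.log η ≤ Real.log (M'+η) := Real.log_le_log hη0 (by linarith)
            rw [hΛdef]; linarith
          have hrp : (ρ - s)^((1:ℝ)/2) ≤ sh := by
            rw [hshdef, Real.sqrt_eq_rpow]
            exact Real.rpow_le_rpow (by linarith) hρs' (by norm_num)
          have hfs : ‖f s‖ ≤ G s - η := by
            have h1 : ‖f s‖ ≤ ⨆ r : Icc (0:ℝ) s, ‖f (r:ℝ)‖ :=
              le_sup_norm hB le_rfl (hst.trans ht1) ⟨hs0, le_rfl⟩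
            linarith [hGeq s]
          have hnorm : ‖f ρ‖ ≤ ‖f s‖ + ‖f ρ - f s‖ := by
            calc ‖f ρ‖ = ‖f s + (f ρ - f s)‖ := by rw [add_sub_cancel]
            _ ≤ ‖f s‖ + ‖f ρ - f s‖ := norm_add_le _ _
          have w1 : C₁*(M'+η) ≤ C₁*(G τ) := mul_le_mul_of_nonneg_left hM'G hC₁
          have e1 : C₁*(M'+η)*((ρ-s)^((1:ℝ)/2)) ≤ C₁*(G τ)*sh :=
            mul_le_mul w1 hrp (Real.rpow_nonneg (by linarith) _) (mul_nonneg hC₁ hGτ0)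
          have w2 : C₂*(M'+η) ≤ C₂*(G τ) := mul_le_mul_of_nonneg_left hM'G hC₂
          have e2a : C₂*(M'+η)* |Real.log (M'+η)| ≤ C₂*(G τ)*Λ :=
            mul_le_mul w2 hlogM (abs_nonneg _) (mul_nonneg hC₂ hGτ0)
          have e2 : C₂*(M'+η)* |Real.log (M'+η)| *(ρ-s) ≤ C₂*(G τ)*Λ*h :=
            mul_le_mul e2a hρs' (by linarith) (mul_nonneg (mul_nonneg hC₂ hGτ0) hΛ0.le)
          have e3 : G τ*(C₁*sh + C₂*Λ*h) ≤ G τ*σ := mul_le_mul_of_nonneg_left hF2 hGτ0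
          linarith [key, hnorm, hfs, e1, e2, e3]
      have h1 : (⨆ r : Icc (0:ℝ) τ, ‖f (r:ℝ)‖) ≤ G s + σ * G τ - η := sup_norm_le hτ0 hpt
      linarith [hGeq τ]
    have claimA2 : ∀ τ, τ ∈ Icc s t → G τ ≤ 1 → G τ ≤ 2 * G s := by
      intro τ hτ hτ1
      have h1 := claimA τ hτ hτ1
      have hGτ0 : 0 ≤ G τ := le_trans hη0.le (hGη τ (hs0.trans hτ.1) (hτ.2.trans ht1))
      have h2 : σ * G τ ≤ (1/2) * G τ := mul_le_mul_of_nonneg_right hσhalf hGτ0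
      linarith
    -- claim B : G stays below 1 on [s,t]
    have claimB : ∀ τ ∈ Icc s t, G τ ≤ 1 := by
      by_contra hcon
      push_neg at hcon
      obtain ⟨τ₀, hτ₀mem, hτ₀⟩ := hcon
      have hBsne : Set.Nonempty {τ : ℝ | τ ∈ Icc s t ∧ 1 < G τ} := ⟨τ₀, hτ₀mem, hτ₀⟩
      have hBsbdd : BddBelow {τ : ℝ | τ ∈ Icc s t ∧ 1 < G τ} := ⟨s, fun τ hτ => hτ.1.1⟩
      obtain ⟨T, hTdef⟩ : ∃ T : ℝ, T = sInf {τ : ℝ | τ ∈ Icc s t ∧ 1 < G τ} := ⟨_, rfl⟩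
      have hTs : s ≤ T := by
        rw [hTdef]; exact le_csInf hBsne (fun τ hτ => hτ.1.1)
      have hTt : T ≤ t := by
        rw [hTdef]; exact le_trans (csInf_le hBsbdd ⟨hτ₀mem, hτ₀⟩) hτ₀mem.2
      obtain ⟨r, hrℓ, hrCf, hr0⟩ : ∃ r : ℝ, r ≤ ℓ/2 ∧ r ≤ 1/(8*(Cf+1)^2) ∧ 0 < r :=
        ⟨min (ℓ/2) (1/(8*(Cf+1)^2)), min_le_left _ _, min_le_right _ _,
          lt_min (by linarith) (by positivity)⟩
      obtain ⟨T', hT'1, hT'2, hT'3⟩ : ∃ T' : ℝ, s ≤ T' ∧ T - r ≤ T' ∧ T' ≤ max s (T-r) :=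
        ⟨max s (T-r), le_max_left _ _, le_max_right _ _, le_rfl⟩
      have hT'T : T' ≤ T := le_trans hT'3 (max_le hTs (by linarith))
      have hT't : T' ≤ t := hT'T.trans hTt
      have hT'0 : 0 ≤ T' := hs0.trans hT'1
      have hGT' : G T' ≤ 2 * Real.exp (-2) := by
        rcases lt_or_ge T' T with hlt | hge
        · have hnot : T' ∉ {τ : ℝ | τ ∈ Icc s t ∧ 1 < G τ} := by
            intro hmem
            have h1 := csInf_le hBsbdd hmem
            rw [← hTdef] at h1; linarith
          have hle1 : G T' ≤ 1 := by
            by_contra hgt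
            exact hnot ⟨⟨hT'1, hT't⟩, lt_of_not_ge hgt⟩
          have h2 := claimA2 T' ⟨hT'1, hT't⟩ hle1
          linarith
        · rcases le_or_gt T s with hc | hc
          · have hT'eq : T' = s := le_antisymm (hT'T.trans hc) hT'1
            rw [hT'eq]
            linarith [Real.exp_pos (-(2:ℝ))]
          · have h3 : max s (T-r) < T := max_lt hc (by linarith)
            linarith [le_trans hge hT'3]
      obtain ⟨τ, hτBs, hτlt⟩ : ∃ τ ∈ {τ : ℝ | τ ∈ Icc s t ∧ 1 < G τ}, τ < T + r := by
        apply exists_lt_of_csInf_lt hBsne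
        rw [← hTdef]; linarith
      have hτmem : τ ∈ Icc s t := hτBs.1
      have hτ0' : 0 ≤ τ := hs0.trans hτmem.1
      have hτ1' : τ ≤ 1 := hτmem.2.trans ht1
      have hτT : T ≤ τ := by
        have h1 := csInf_le hBsbdd hτBs
        rw [← hTdef] at h1; exact h1
      have hsmall : Cf * Real.sqrt (2*r) ≤ 1/2 := sqrt_small hCf0 hr0 hrCf
      have hGτle : G τ ≤ 2*Real.exp (-2) + Cf*Real.sqrt (2*r) := by
        have hpt : ∀ ρ ∈ Icc (0:ℝ) τ,
            ‖f ρ‖ ≤ 2*Real.exp (-2) + Cf*Real.sqrt (2*r) - η := by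
          intro ρ hρ
          have hρ1 : ρ ≤ 1 := hρ.2.trans hτ1'
          rcases le_total ρ T' with hc | hc
          · have h1 : ‖f ρ‖ ≤ ⨆ r' : Icc (0:ℝ) T', ‖f (r':ℝ)‖ :=
              le_sup_norm hB le_rfl (hT't.trans ht1) ⟨hρ.1, hc⟩
            have h2 : 0 ≤ Cf*Real.sqrt (2*r) := mul_nonneg hCf0 (Real.sqrt_nonneg _)
            linarith [hGeq T']
          · have hρT' : ρ - T' ≤ 2*r := by linarith [hρ.2]
            have hmod1 := hmod T' ρ hT'0 hc hρ1 (by linarith)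
            have h1 : Real.sqrt (ρ - T') ≤ Real.sqrt (2*r) := Real.sqrt_le_sqrt hρT'
            have h2 : Cf * Real.sqrt (ρ-T') ≤ Cf * Real.sqrt (2*r) :=
              mul_le_mul_of_nonneg_left h1 hCf0
            have h3 : ‖f T'‖ ≤ ⨆ r' : Icc (0:ℝ) T', ‖f (r':ℝ)‖ :=
              le_sup_norm hB le_rfl (hT't.trans ht1) ⟨hT'0, le_rfl⟩
            have hnorm : ‖f ρ‖ ≤ ‖f T'‖ + ‖f ρ - f T'‖ := by
              calc ‖f ρ‖ = ‖f T' + (f ρ - f T')‖ := by rw [add_sub_cancel]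
              _ ≤ ‖f T'‖ + ‖f ρ - f T'‖ := norm_add_le _ _
            linarith [hGeq T']
        have h1 := sup_norm_le hτ0' hpt
        linarith [hGeq τ]
      linarith [hτBs.2]
    -- refined estimate at t
    have hmt : G t ≤ 1 := claimB t ⟨hst, le_rfl⟩
    have hm2 : G t ≤ 2 * G s := claimA2 t ⟨hst, le_rfl⟩ hmt
    have hmη : η ≤ G t := hGη t (hs0.trans hst) ht1
    have hm0 : 0 < G t := lt_of_lt_of_le hη0 hmη
    have hme : G t ≤ Real.exp (-1) := by
      have := two_exp_neg_two_le
      linarith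
    have hu1 : 1 ≤ -Real.log (G t) := by
      have h1 : Real.log (G t) ≤ Real.log (Real.exp (-1)) := Real.log_le_log hm0 hme
      rw [Real.log_exp] at h1
      linarith
    have huΛ : -Real.log (G t) ≤ Λ := by
      have h1 : Real.log η ≤ Real.log (G t) := Real.log_le_log hη0 hmη
      rw [hΛdef]; linarith
    have href : G t ≤ G s + C₁*(G t)*sh + C₂*((G t)*(-Real.log (G t)))*h := by
      have hterm1 : 0 ≤ C₁*(G t)*sh := mul_nonneg (mul_nonneg hC₁ hm0.le) hsh0.le
      have hterm2 : 0 ≤ C₂*((G t)*(-Real.log (G t)))*h :=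
        mul_nonneg (mul_nonneg hC₂ (mul_nonneg hm0.le (by linarith))) hh0.le
      have hpt : ∀ ρ ∈ Icc (0:ℝ) t,
          ‖f ρ‖ ≤ G s + C₁*(G t)*sh + C₂*((G t)*(-Real.log (G t)))*h - η := by
        intro ρ hρ
        have hρ1 : ρ ≤ 1 := hρ.2.trans ht1
        rcases le_total ρ s with hρs | hsρ
        · have h1 : ‖f ρ‖ ≤ ⨆ r : Icc (0:ℝ) s, ‖f (r:ℝ)‖ :=
            le_sup_norm hB le_rfl (hst.trans ht1) ⟨hρ.1, hρs⟩
          linarith [hGeq s]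
        · have hρs' : ρ - s ≤ h := by linarith [hρ.2]
          have key := hf s ρ hs0 hsρ hρ1 (by linarith)
          obtain ⟨M', hM'def⟩ : ∃ x : ℝ, x = ⨆ r : Icc s ρ, ‖f (r:ℝ)‖ := ⟨_, rfl⟩
          rw [← hM'def] at key
          have hM'0 : 0 ≤ M' := by
            rw [hM'def]
            exact le_trans (norm_nonneg (f s)) (le_sup_norm hB hs0 hρ1 ⟨le_rfl, hsρ⟩)
          have hM'G : M' + η ≤ G t := by
            have h1 : M' ≤ ⨆ r : Icc (0:ℝ) t, ‖f (r:ℝ)‖ := by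
              rw [hM'def]
              exact sup_norm_le hsρ (fun r' hr' =>
                le_sup_norm hB le_rfl ht1 ⟨hs0.trans hr'.1, hr'.2.trans hρ.2⟩)
            linarith [hGeq t]
          have hMη0 : 0 < M' + η := by linarith
          have hxlx : (M'+η)*(-Real.log (M'+η)) ≤ (G t)*(-Real.log (G t)) :=
            xlogx_mono hMη0 hM'G hme
          have hlogM : |Real.log (M'+η)| = -Real.log (M'+η) :=
            abs_of_nonpos (Real.log_nonpos hMη0.le (by linarith))
          have hrp : (ρ - s)^((1:ℝ)/2) ≤ sh := by
            rw [hshdef, Real.sqrt_eq_rpow]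
            exact Real.rpow_le_rpow (by linarith) hρs' (by norm_num)
          have hfs : ‖f s‖ ≤ G s - η := by
            have h1 : ‖f s‖ ≤ ⨆ r : Icc (0:ℝ) s, ‖f (r:ℝ)‖ :=
              le_sup_norm hB le_rfl (hst.trans ht1) ⟨hs0, le_rfl⟩
            linarith [hGeq s]
          have hnorm : ‖f ρ‖ ≤ ‖f s‖ + ‖f ρ - f s‖ := by
            calc ‖f ρ‖ = ‖f s + (f ρ - f s)‖ := by rw [add_sub_cancel]
            _ ≤ ‖f s‖ + ‖f ρ - f s‖ := norm_add_le _ _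
          have w1 : C₁*(M'+η) ≤ C₁*(G t) := mul_le_mul_of_nonneg_left hM'G hC₁
          have e1 : C₁*(M'+η)*((ρ-s)^((1:ℝ)/2)) ≤ C₁*(G t)*sh :=
            mul_le_mul w1 hrp (Real.rpow_nonneg (by linarith) _) (mul_nonneg hC₁ hm0.le)
          have e2a : C₂*((M'+η)*(-Real.log (M'+η))) ≤ C₂*((G t)*(-Real.log (G t))) :=
            mul_le_mul_of_nonneg_left hxlx hC₂
          have e2 : C₂*((M'+η)*(-Real.log (M'+η)))*(ρ-s) ≤
              C₂*((G t)*(-Real.log (G t)))*h :=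
            mul_le_mul e2a hρs' (by linarith)
              (mul_nonneg hC₂ (mul_nonneg hm0.le (by linarith)))
          rw [hlogM] at key
          linarith [key, hnorm, hfs, e1, e2]
      have h1 := sup_norm_le (hs0.trans hst) hpt
      linarith [hGeq t]
    -- logarithmic contraction
    have hgle : Real.log (G s) ≤ -α k := by
      have h1 : Real.log (G s) ≤ Real.log (Real.exp (-α k)) := Real.log_le_log hg0 ih
      rwa [Real.log_exp] at h1
    have hxle : C₁*sh + C₂*(-Real.log (G t))*h ≤ σ := by
      have h1 : C₂*(-Real.log (G t)) ≤ C₂*Λ := mul_le_mul_of_nonneg_left huΛ hC₂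
      have h2 : C₂*(-Real.log (G t))*h ≤ C₂*Λ*h := mul_le_mul_of_nonneg_right h1 hh0.le
      linarith
    have hxpos : 0 ≤ C₁*sh + C₂*(-Real.log (G t))*h :=
      add_nonneg (mul_nonneg hC₁ hsh0.le)
        (mul_nonneg (mul_nonneg hC₂ (by linarith)) hh0.le)
    have hmx : G t * (1 - (C₁*sh + C₂*(-Real.log (G t))*h)) ≤ G s := by
      have hexp : G t * (1 - (C₁*sh + C₂*(-Real.log (G t))*h))
          = G t - C₁*(G t)*sh - C₂*((G t)*(-Real.log (G t)))*h := by ring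
      linarith [href, hexp.le, hexp.ge]
    have hls := log_contract hm0 hg0 hxpos hxle hσhalf hmx
    have hexpand : (1+2*σ)*(C₁*sh + C₂*(-Real.log (G t))*h)
        = c₁*sh + c₂*h*(-Real.log (G t)) := by
      rw [hc₁def, hc₂def]; ring
    have hstep1 : Real.log (G t) * (1 + c₂*h) ≤ -α k + c₁*sh := by
      rw [hexpand] at hls
      linarith
    have hαrec : -α k + c₁*sh ≤ (-(α (k+1))) * D := by
      have h0 : α k = Λ/D^k - c₁*sh*(k:ℝ) := hαeq k
      have h1 : α (k+1) = Λ/D^(k+1) - c₁*sh*((k:ℝ)+1) := by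
        rw [hαeq (k+1)]; push_cast; ring
      rw [h0, h1]
      exact alpha_rec hD1 hΛ0.le (mul_nonneg hc₁0 hsh0.le)
    have hfinal : Real.log (G t) ≤ -α (k+1) := by
      have h1 : Real.log (G t) * D ≤ (-(α (k+1))) * D := by
        rw [hDdef]
        calc Real.log (G t) * (1 + c₂*h) ≤ -α k + c₁*sh := hstep1
        _ ≤ (-(α (k+1))) * D := hαrec
        _ = (-(α (k+1))) * (1 + c₂*h) := by rw [hDdef]
      exact le_of_mul_le_mul_right h1 hD0
    have hGt : G t ≤ Real.exp (-α (k+1)) := by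
      rw [← Real.exp_log hm0]
      exact Real.exp_le_exp.mpr hfinal
    exact hGt
  -- induction
  have main : ∀ k : ℕ, k ≤ N → G ((k:ℝ)*h) ≤ Real.exp (-α k) := by
    intro k
    induction k with
    | zero =>
      intro _
      have h1 : ((0:ℕ):ℝ)*h = 0 := by norm_num
      rw [h1, hG0, hα0, hΛdef, neg_neg, Real.exp_log hη0]
    | succ n ihn =>
      intro hk
      have h1 := ihn (Nat.le_of_succ_le hk)
      have h2 := step n (Nat.lt_of_succ_le hk) h1
      have h3 : ((n:ℝ)+1)*h = (((n+1:ℕ)):ℝ)*h := by push_cast; ring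
      rwa [h3] at h2
  have hfin : G 1 ≤ Real.exp (-α N) := by
    have h1 := main N le_rfl
    have h2 : ((N:ℝ))*h = 1 := by rw [mul_comm]; exact hhN
    rwa [h2] at h1
  intro t ht
  have h1 : ‖f t‖ ≤ ⨆ r : Icc (0:ℝ) 1, ‖f (r:ℝ)‖ := le_sup_norm hB le_rfl le_rfl ht
  have h2 : Real.exp (-α N) ≤ Real.exp (-((Real.exp (-C₂) - δ)*Λ)) :=
    Real.exp_le_exp.mpr (by linarith [hαN])
  have h3 : Real.exp (-((Real.exp (-C₂) - δ)*Λ)) = η ^ (Real.exp (-C₂) - δ) := by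
    rw [hΛdef, Real.rpow_def_of_pos hη0]
    congr 1
    ring
  linarith [hGeq 1, hfin, h2, h3.le, h3.ge, hη0]
end

section
/- Let $(E,\|\cdot\|)$ be a normed vector space, $\ell\in(0,1]$, $\varepsilon\ge 0$, and $f:[0,1]\to E$ with $f(0)=0$. Assume that for all $0\le S<T\le 1$ with $T-S\le\ell$ and all $S\le s<t\le T$, $\|f(t)-f(s)\|\le\big(2\varepsilon+\|f(S)\|\big)(t-s)^{1/2}$. Then there exists a constant $C$ depending only on $\ell$ (e.g. $C=2(1+\ell^{1/2})^{\lceil 1/\ell\rceil}$) such that $\sup_{0\le s<t\le 1}\frac{\|f(t)-f(s)\|}{(t-s)^{1/2}}\le C\,\varepsilon$. -/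
theorem local_to_global_holder {E : Type*} [NormedAddCommGroup E]
    (ℓ : ℝ) (hℓ : ℓ ∈ Set.Ioc (0:ℝ) 1) :
    ∃ C : ℝ, 0 < C ∧ ∀ ε : ℝ, 0 ≤ ε → ∀ f : ℝ → E, f 0 = 0 →
      (∀ S T s t : ℝ, 0 ≤ S → S < T → T ≤ 1 → T - S ≤ ℓ → S ≤ s → s < t → t ≤ T →
        ‖f t - f s‖ ≤ (2 * ε + ‖f S‖) * (t - s) ^ ((1:ℝ)/2)) →
      ∀ s t : ℝ, 0 ≤ s → s < t → t ≤ 1 →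
        ‖f t - f s‖ / (t - s) ^ ((1:ℝ)/2) ≤ C * ε := by
  obtain ⟨hℓ0, hℓ1⟩ := hℓ
  set N : ℕ := ⌈1/ℓ⌉₊ with hN
  have hNℓ : 1 ≤ (N : ℝ) * ℓ := by
    rw [← div_le_iff₀ hℓ0]
    exact Nat.le_ceil _
  have hsq : (0:ℝ) < ℓ ^ ((1:ℝ)/2) := Real.rpow_pos_of_pos hℓ0 _
  have hsq1 : ℓ ^ ((1:ℝ)/2) ≤ 1 := Real.rpow_le_one hℓ0.le hℓ1 (by norm_num)
  set K : ℝ := 2 ^ (N + 1) with hK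
  have hKpos : (0:ℝ) < K := by positivity
  refine ⟨(2 + 3 * K) / ℓ ^ ((1:ℝ)/2), by positivity, ?_⟩
  intro ε hε f hf0 H s t hs hst ht1
  have key : ∀ n : ℕ, ∀ S : ℝ, 0 ≤ S → S ≤ 1 → S ≤ n * ℓ →
      ‖f S‖ ≤ (2 ^ (n + 1) - 2) * ε := by
    intro n
    induction n with
    | zero =>
      intro S hS0 hS1 hSn
      have hS : S = 0 := le_antisymm (by simpa using hSn) hS0
      simp [hS, hf0]
    | succ n ih =>
      intro S hS0 hS1 hSn
      have hmono : ((2:ℝ) ^ (n + 1) - 2) * ε ≤ (2 ^ (n + 1 + 1) - 2) * ε := by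
        apply mul_le_mul_of_nonneg_right _ hε
        have : (2:ℝ) ^ (n + 1) ≤ 2 ^ (n + 1 + 1) :=
          pow_le_pow_right₀ (by norm_num) (by omega)
        linarith
      rcases le_or_gt S ((n : ℝ) * ℓ) with h | h
      · exact le_trans (ih S hS0 hS1 h) hmono
      · have h0S : 0 < S := lt_of_le_of_lt (by positivity) h
        set S' : ℝ := max (S - ℓ) 0 with hS'
        have hS'0 : 0 ≤ S' := le_max_right _ _
        have hS'lt : S' < S := by
          rw [hS', max_lt_iff]
          constructor <;> linarith
        have hSS' : S - S' ≤ ℓ := by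
          have := le_max_left (S - ℓ) 0
          linarith
        have hS'n : S' ≤ (n : ℝ) * ℓ := by
          rcases le_or_gt ℓ S with h2 | h2
          · have he : S' = S - ℓ := max_eq_left (by linarith)
            rw [he]
            have : S ≤ ((n : ℝ) + 1) * ℓ := by push_cast at hSn; linarith
            linarith
          · have he : S' = 0 := max_eq_right (by linarith)
            rw [he]; positivity
        have hIH := ih S' hS'0 (by linarith) hS'n
        have hloc := H S' S S' S hS'0 hS'lt hS1 hSS' le_rfl hS'lt le_rfl
        have hpow : (S - S') ^ ((1:ℝ)/2) ≤ 1 :=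
          Real.rpow_le_one (by linarith) (by linarith) (by norm_num)
        have hnn : (0:ℝ) ≤ 2 * ε + ‖f S'‖ := by positivity
        have h1 : ‖f S - f S'‖ ≤ 2 * ε + ‖f S'‖ := by
          calc ‖f S - f S'‖ ≤ (2 * ε + ‖f S'‖) * (S - S') ^ ((1:ℝ)/2) := hloc
            _ ≤ (2 * ε + ‖f S'‖) * 1 := mul_le_mul_of_nonneg_left hpow hnn
            _ = 2 * ε + ‖f S'‖ := mul_one _
        have h2 := norm_sub_norm_le (f S) (f S')
        have h3 : ‖f S‖ ≤ 2 * ((2 ^ (n + 1) - 2) * ε) + 2 * ε := by linarith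
        calc ‖f S‖ ≤ 2 * ((2 ^ (n + 1) - 2) * ε) + 2 * ε := h3
          _ = (2 ^ (n + 1 + 1) - 2) * ε := by rw [pow_succ]; ring
  have bound : ∀ S : ℝ, 0 ≤ S → S ≤ 1 → ‖f S‖ ≤ K * ε := by
    intro S h0 h1
    refine le_trans (key N S h0 h1 (le_trans h1 hNℓ)) ?_
    apply mul_le_mul_of_nonneg_right _ hε
    rw [hK]; linarith
  have hts0 : (0:ℝ) < t - s := by linarith
  have hts : (0:ℝ) < (t - s) ^ ((1:ℝ)/2) := Real.rpow_pos_of_pos hts0 _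
  rw [div_le_iff₀ hts]
  have hC : 2 + 3 * K ≤ (2 + 3 * K) / ℓ ^ ((1:ℝ)/2) := by
    rw [le_div_iff₀ hsq]
    nlinarith
  rcases le_or_gt (t - s) ℓ with h | h
  · have hloc := H s t s t hs hst ht1 (by linarith) le_rfl hst le_rfl
    have hfs := bound s hs (by linarith)
    calc ‖f t - f s‖ ≤ (2 * ε + ‖f s‖) * (t - s) ^ ((1:ℝ)/2) := hloc
      _ ≤ ((2 + 3 * K) / ℓ ^ ((1:ℝ)/2) * ε) * (t - s) ^ ((1:ℝ)/2) := by
        apply mul_le_mul_of_nonneg_right _ hts.le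
        nlinarith
  · have hft := bound t (by linarith) ht1
    have hfs := bound s hs (by linarith)
    have h2 : ‖f t - f s‖ ≤ 2 * (K * ε) := by
      calc ‖f t - f s‖ ≤ ‖f t‖ + ‖f s‖ := norm_sub_le _ _
        _ ≤ 2 * (K * ε) := by linarith
    have hpow : ℓ ^ ((1:ℝ)/2) ≤ (t - s) ^ ((1:ℝ)/2) :=
      Real.rpow_le_rpow hℓ0.le h.le (by norm_num)
    have hCl : (2 + 3 * K) / ℓ ^ ((1:ℝ)/2) * ℓ ^ ((1:ℝ)/2) = 2 + 3 * K :=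
      div_mul_cancel₀ _ hsq.ne'
    calc ‖f t - f s‖ ≤ 2 * (K * ε) := h2
      _ ≤ (2 + 3 * K) * ε := by nlinarith
      _ = ((2 + 3 * K) / ℓ ^ ((1:ℝ)/2) * ℓ ^ ((1:ℝ)/2)) * ε := by rw [hCl]
      _ = ((2 + 3 * K) / ℓ ^ ((1:ℝ)/2) * ε) * ℓ ^ ((1:ℝ)/2) := by ring
      _ ≤ (2 + 3 * K) / ℓ ^ ((1:ℝ)/2) * ε * (t - s) ^ ((1:ℝ)/2) :=
        mul_le_mul_of_nonneg_left hpow (by positivity)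
end
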